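/- Let f ∈ ℝ[x_1,…,x_n] and let r ≥ deg(f). Set f_min := min_{x ∈ [−1,1]ⁿ} f(x) and f_{(2r)} := sup { t ∈ ℝ : f − t ∈ Q(1−x_1², …, 1−x_n²)_{2r} }. Then for every polynomial q ∈ Q(1−x_1², …, 1−x_n²)_{2r} one has f_min − f_{(2r)} ≤ ‖f − f_min − q‖_{1,cheb}. -/

import Mathlib

open Polynomial Finset

/-- The multivariate Chebyshev polynomial `T_α(x) = ∏ i, T_{α i}(x_i)`. -/
noncomputable def chebMv {n : ℕ} (α : Fin n → ℕ) : MvPolynomial (Fin n) ℝ :=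
  ∏ i, Polynomial.aeval (MvPolynomial.X i) (Polynomial.Chebyshev.T ℝ (α i))

/-- Membership in the truncated quadratic module `Q(1-x₁², …, 1-xₙ²)_r`. -/
def memCubeQM (n r : ℕ) (p : MvPolynomial (Fin n) ℝ) : Prop :=
  ∃ (σ₀ : MvPolynomial (Fin n) ℝ) (σ : Fin n → MvPolynomial (Fin n) ℝ),
    IsSumSq σ₀ ∧ (∀ i, IsSumSq (σ i)) ∧ σ₀.totalDegree ≤ r ∧
    (∀ i, (σ i).totalDegree ≤ r - 2) ∧
    p = σ₀ + ∑ i, (1 - MvPolynomial.X i ^ 2) * σ i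

/-!
If `|α| ≤ 2r` then `1 - ε T_α ∈ Q_{2r}` for `ε = ±1`. Split `α = β + γ` with `|β|, |γ| ≤ r`,
where `β` and `γ` overlap only in one coordinate `i`, say `α_i = b + c`. By the addition formula
`T_{b+c} = T_b T_c - (1 - x²) U_{b-1} U_{c-1}` and Pell's identity `T_k² + (1 - x²) U_{k-1}² = 1`,
`2 (1 - ε T_α)` is a square of degree `≤ 2r`, plus `1 - x_i²` times a square, plus `1 - P²` and
`1 - Q²`, where `P`, `Q` are the Chebyshev monomials of `β`, `γ` away from `i`; these telescope
coordinate by coordinate, again by Pell's identity.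

As `T_k` has degree `k` with nonzero leading coefficient, the Chebyshev expansion of
`f - f_min - q` only involves `|α| ≤ 2r`, so
`f - (f_min - ‖c‖₁) = q + ∑ (|c_α| + c_α T_α) ∈ Q_{2r}` and `f_{(2r)} ≥ f_min - ‖c‖₁`.
The supremum is finite since `Q_{2r}` is nonnegative on the cube.
-/

theorem Polynomial.eq_of_eval_cos_eq {p q : ℝ[X]}
    (h : ∀ θ : ℝ, p.eval (Real.cos θ) = q.eval (Real.cos θ)) : p = q := by
  refine eq_of_infinite_eval_eq p q ((Set.Icc_infinite (by norm_num : (-1 : ℝ) < 1)).mono ?_)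
  intro x hx
  simpa [Real.cos_arccos hx.1 hx.2] using h (Real.arccos x)

namespace Polynomial.Chebyshev

theorem T_add (m k : ℤ) :
    T ℝ (m + k) = T ℝ m * T ℝ k - (1 - X ^ 2) * (U ℝ (m - 1) * U ℝ (k - 1)) := by
  refine eq_of_eval_cos_eq fun θ => ?_
  have hU (j : ℤ) : (U ℝ (j - 1)).eval (Real.cos θ) * Real.sin θ = Real.sin (j * θ) := by
    rw [U_real_cos, Int.cast_sub, Int.cast_one, sub_add_cancel]
  simp only [eval_sub, eval_mul, eval_pow, eval_one, eval_X, T_real_cos]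
  rw [Int.cast_add, add_mul, Real.cos_add, ← hU m, ← hU k, ← Real.sin_sq]
  ring

theorem T_sq_add_one_sub_X_sq_mul_U_sq (m : ℤ) :
    T ℝ m ^ 2 + (1 - X ^ 2) * U ℝ (m - 1) ^ 2 = 1 := by
  have h := T_add m (-m)
  rw [add_neg_cancel, T_zero, T_neg, U_neg_sub_one] at h
  linear_combination -h

end Polynomial.Chebyshev

namespace MvPolynomial

variable {R σ : Type*} [CommSemiring R]

theorem totalDegree_aeval_X_le (p : R[X]) (i : σ) :
    (Polynomial.aeval (X i) p : MvPolynomial σ R).totalDegree ≤ p.natDegree := by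
  rw [aeval_eq_sum_range]
  refine (totalDegree_finsetSum _ _).trans (Finset.sup_le fun j hj => ?_)
  refine (totalDegree_smul_le _ _).trans ?_
  rw [X_pow_eq_monomial]
  refine (totalDegree_monomial_le _ _).trans ?_
  simpa using Nat.lt_succ_iff.mp (Finset.mem_range.mp hj)

theorem coeff_prod_aeval_X [Fintype σ] [DecidableEq σ] (p : σ → R[X]) (μ : σ →₀ ℕ) :
    coeff μ (∏ i, Polynomial.aeval (X i) (p i)) = ∏ i, (p i).coeff (μ i) := by
  have hp (i : σ) : Polynomial.aeval (X i) (p i) =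
      ∑ k ∈ (p i).support, monomial (Finsupp.single i k) ((p i).coeff k) := by
    conv_lhs => rw [(p i).as_sum_support]
    simp [X_pow_eq_monomial, C_mul_monomial]
  have hκ (κ : σ → ℕ) : ∑ i, Finsupp.single i (κ i) = μ ↔ κ = ⇑μ := by
    rw [← Finsupp.equivFunOnFinite_symm_eq_sum, Equiv.symm_apply_eq]; rfl
  simp_rw [hp, Finset.prod_univ_sum, ← monomial_sum_prod, coeff_sum, coeff_monomial, hκ,
    Finset.sum_ite_eq']
  split_ifs with hμ
  · rfl
  · obtain ⟨i, hi⟩ : ∃ i, (p i).coeff (μ i) = 0 := by simpa [Fintype.mem_piFinset] using hμ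
    exact (Finset.prod_eq_zero (Finset.mem_univ i) hi).symm

theorem isSumSq_C {a : ℝ} (ha : 0 ≤ a) : IsSumSq (C a : MvPolynomial σ ℝ) := by
  rw [← Real.mul_self_sqrt ha, C_mul]
  exact IsSumSq.mul_self _

theorem IsSumSq.eval_nonneg {p : MvPolynomial σ ℝ} (hp : IsSumSq p) (x : σ → ℝ) :
    0 ≤ eval x p := by
  induction hp with
  | zero => simp
  | sq_add a _ ih => simpa only [map_add, map_mul] using add_nonneg (mul_self_nonneg _) ih

end MvPolynomial

open MvPolynomial

section CubeQM

variable {n m : ℕ} {p q : MvPolynomial (Fin n) ℝ}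

theorem memCubeQM_zero : memCubeQM n m 0 :=
  ⟨0, 0, .zero, fun _ => .zero, by simp, fun _ => by simp, by simp⟩

theorem memCubeQM.add (hp : memCubeQM n m p) (hq : memCubeQM n m q) : memCubeQM n m (p + q) := by
  obtain ⟨σ₀, σ, hσ₀, hσ, hσ₀d, hσd, rfl⟩ := hp
  obtain ⟨τ₀, τ, hτ₀, hτ, hτ₀d, hτd, rfl⟩ := hq
  refine ⟨σ₀ + τ₀, σ + τ, hσ₀.add hτ₀, fun i => (hσ i).add (hτ i),
    (totalDegree_add _ _).trans (max_le hσ₀d hτ₀d),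
    fun i => (totalDegree_add _ _).trans (max_le (hσd i) (hτd i)), ?_⟩
  simp only [Pi.add_apply, mul_add, Finset.sum_add_distrib]
  ring

theorem memCubeQM_sum {ι : Type*} {s : Finset ι} {f : ι → MvPolynomial (Fin n) ℝ}
    (h : ∀ i ∈ s, memCubeQM n m (f i)) : memCubeQM n m (∑ i ∈ s, f i) :=
  Finset.sum_induction f _ (fun _ _ => memCubeQM.add) memCubeQM_zero h

theorem memCubeQM.mono {m' : ℕ} (hp : memCubeQM n m p) (hm : m ≤ m') : memCubeQM n m' p := by
  obtain ⟨σ₀, σ, hσ₀, hσ, hσ₀d, hσd, rfl⟩ := hp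
  exact ⟨σ₀, σ, hσ₀, hσ, hσ₀d.trans hm, fun i => (hσd i).trans (by omega), rfl⟩

theorem memCubeQM.smul {a : ℝ} (ha : 0 ≤ a) (hp : memCubeQM n m p) : memCubeQM n m (a • p) := by
  obtain ⟨σ₀, σ, hσ₀, hσ, hσ₀d, hσd, rfl⟩ := hp
  refine ⟨a • σ₀, a • σ, ?_, fun i => ?_, (totalDegree_smul_le _ _).trans hσ₀d,
    fun i => (totalDegree_smul_le _ _).trans (hσd i), ?_⟩
  · rw [MvPolynomial.smul_eq_C_mul]; exact (isSumSq_C ha).mul hσ₀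
  · rw [Pi.smul_apply, MvPolynomial.smul_eq_C_mul]; exact (isSumSq_C ha).mul (hσ i)
  · simp only [smul_add, Finset.smul_sum, Pi.smul_apply, mul_smul_comm]

theorem memCubeQM_of_isSumSq (hp : IsSumSq p) (hd : p.totalDegree ≤ m) : memCubeQM n m p :=
  ⟨p, 0, hp, fun _ => .zero, hd, fun _ => by simp, by simp⟩

theorem memCubeQM_C {a : ℝ} (ha : 0 ≤ a) : memCubeQM n m (C a) :=
  memCubeQM_of_isSumSq (isSumSq_C ha) (by simp)

theorem memCubeQM_sq {d : ℕ} (hp : p.totalDegree ≤ d) : memCubeQM n (2 * d) (p ^ 2) :=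
  memCubeQM_of_isSumSq (IsSquare.sq p).isSumSq ((totalDegree_pow _ _).trans (by omega))

theorem memCubeQM_one_sub_X_sq_mul_sq {d : ℕ} (i : Fin n) (hp : p.totalDegree ≤ d - 1) :
    memCubeQM n (2 * d) ((1 - X i ^ 2) * p ^ 2) := by
  refine ⟨0, Pi.single i (p ^ 2), .zero, fun j => ?_, by simp, fun j => ?_, ?_⟩
  · rcases eq_or_ne j i with rfl | hj
    · simpa using (IsSquare.sq p).isSumSq
    · simp [hj]
  · rcases eq_or_ne j i with rfl | hj
    · simpa using (totalDegree_pow p 2).trans (by omega)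
    · simp [hj]
  · simp [Pi.single_apply]

theorem memCubeQM.eval_nonneg (hp : memCubeQM n m p) {x : Fin n → ℝ}
    (hx : ∀ i, x i ∈ Set.Icc (-1 : ℝ) 1) : 0 ≤ eval x p := by
  obtain ⟨σ₀, σ, hσ₀, hσ, -, -, rfl⟩ := hp
  have hg (i : Fin n) : 0 ≤ 1 - x i ^ 2 := by
    nlinarith [(hx i).1, (hx i).2]
  simp only [map_add, map_sum, map_mul, map_sub, map_one, map_pow, MvPolynomial.eval_X]
  exact add_nonneg (hσ₀.eval_nonneg x)
    (Finset.sum_nonneg fun i _ => mul_nonneg (hg i) ((hσ i).eval_nonneg x))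

theorem memCubeQM.totalDegree_le {m : ℕ} {p : MvPolynomial (Fin n) ℝ} (hp : memCubeQM n m p)
    (hm : 2 ≤ m) : p.totalDegree ≤ m := by
  obtain ⟨σ₀, σ, -, -, hσ₀, hσ, rfl⟩ := hp
  refine (totalDegree_add _ _).trans (max_le hσ₀ ((totalDegree_finsetSum _ _).trans
    (Finset.sup_le fun i _ => (totalDegree_mul _ _).trans ?_)))
  have hg : (1 - X i ^ 2 : MvPolynomial (Fin n) ℝ).totalDegree ≤ 2 :=
    (totalDegree_sub _ _).trans (max_le (by simp) ((totalDegree_pow _ _).trans (by simp)))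
  have := hσ i
  omega

end CubeQM

section ChebyshevExpansion

open Polynomial.Chebyshev

variable {n : ℕ}

theorem coeff_chebMv (α : Fin n → ℕ) (μ : Fin n →₀ ℕ) :
    (chebMv α).coeff μ = ∏ i, (T ℝ (α i)).coeff (μ i) :=
  MvPolynomial.coeff_prod_aeval_X _ μ

theorem chebMv_zero : chebMv (0 : Fin n → ℕ) = 1 := by
  simp [chebMv, T_zero]

theorem sum_le_of_eq_sum_smul_chebMv {p : MvPolynomial (Fin n) ℝ} {d : ℕ}
    (hp : p.totalDegree ≤ d) {c : (Fin n → ℕ) →₀ ℝ}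
    (hc : p = ∑ α ∈ c.support, c α • chebMv α) : ∀ α ∈ c.support, ∑ i, α i ≤ d := by
  by_contra! ⟨α, hα, hαd⟩
  obtain ⟨β, hβ, hmax⟩ := c.support.exists_max_image (fun α => ∑ i, α i) ⟨α, hα⟩
  set μ := Finsupp.equivFunOnFinite.symm β
  have hμ : ⇑μ = β := rfl
  have hp_coeff : p.coeff μ = 0 := by
    refine MvPolynomial.coeff_eq_zero_of_totalDegree_lt (hp.trans_lt (hαd.trans_le ?_))
    rw [Finset.sum_subset (subset_univ _) fun i _ hi => Finsupp.notMem_support_iff.mp hi, hμ]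
    exact hmax α hα
  have hother (γ : Fin n → ℕ) (hγ : γ ∈ c.support) (hne : γ ≠ β) : (chebMv γ).coeff μ = 0 := by
    obtain ⟨i, hi⟩ : ∃ i, γ i < β i := by
      by_contra! hle
      exact hne (funext fun i => ((Finset.sum_eq_sum_iff_of_le fun i _ => hle i).mp
        ((Finset.sum_le_sum fun i _ => hle i).antisymm (hmax γ hγ)) i (mem_univ i)).symm)
    rw [coeff_chebMv]
    exact prod_eq_zero (mem_univ i) (coeff_eq_zero_of_natDegree_lt (by simpa [hμ] using hi))
  have hβ_coeff : (chebMv β).coeff μ ≠ 0 := by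
    rw [coeff_chebMv]
    refine prod_ne_zero_iff.mpr fun i _ => ?_
    have h := leadingCoeff_ne_zero.mpr (T_ne_zero ℝ (β i))
    rwa [leadingCoeff, natDegree_T, Int.natAbs_natCast] at h
  rw [hc, MvPolynomial.coeff_sum, sum_eq_single β (fun γ hγ hne => by
    rw [MvPolynomial.coeff_smul, hother γ hγ hne, smul_zero]) (fun h => (h hβ).elim),
    MvPolynomial.coeff_smul, smul_eq_mul] at hp_coeff
  exact Finsupp.mem_support_iff.mp hβ ((mul_eq_zero.mp hp_coeff).resolve_right hβ_coeff)

end ChebyshevExpansion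

theorem two_mul_one_sub_mul_mul_eq {A : Type*} [CommRing A] {g t t₁ t₂ u₁ u₂ e P Q : A}
    (h₁ : t₁ ^ 2 + g * u₁ ^ 2 = 1) (h₂ : t₂ ^ 2 + g * u₂ ^ 2 = 1)
    (ht : t = t₁ * t₂ - g * (u₁ * u₂)) (he : e ^ 2 = 1) :
    2 * (1 - e * (t * (P * Q))) =
      (t₁ * P - e * (t₂ * Q)) ^ 2 + g * (u₁ * P + e * (u₂ * Q)) ^ 2 +
        (1 - P ^ 2) + (1 - Q ^ 2) := by
  linear_combination (-2 * e * P * Q) * ht - P ^ 2 * h₁ - e ^ 2 * Q ^ 2 * h₂ - Q ^ 2 * he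

theorem exists_add_eq_sum_eq {ι : Type*} [Fintype ι] [DecidableEq ι] [Nonempty ι] (α : ι → ℕ)
    {m : ℕ} (hm : m ≤ ∑ j, α j) :
    ∃ (i : ι) (β γ : ι → ℕ), β + γ = α ∧ ∑ j, β j = m ∧ ∀ j ≠ i, β j = 0 ∨ γ j = 0 := by
  induction m with
  | zero => exact ⟨Classical.arbitrary ι, 0, α, zero_add α, by simp, fun _ _ => .inl rfl⟩
  | succ m ih =>
    obtain ⟨i, β, γ, rfl, hβ, hβγ⟩ := ih (by omega)
    obtain ⟨k, hk, hβγk⟩ : ∃ k, γ k ≠ 0 ∧ ∀ j ≠ k, β j = 0 ∨ γ j = 0 := by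
      by_cases hi : γ i = 0
      · have hγ : ∑ j, γ j ≠ 0 := by
          simp only [Pi.add_apply, sum_add_distrib] at hm
          omega
        obtain ⟨k, -, hk⟩ := exists_ne_zero_of_sum_ne_zero hγ
        refine ⟨k, hk, fun j _ => ?_⟩
        rcases eq_or_ne j i with rfl | hj
        · exact .inr hi
        · exact hβγ j hj
      · exact ⟨i, hi, hβγ⟩
    refine ⟨k, β + Pi.single k 1, γ - Pi.single k 1, ?_, ?_, fun j hj => ?_⟩
    · funext j
      rcases eq_or_ne j k with rfl | hj
      · simp only [Pi.add_apply, Pi.sub_apply, Pi.single_eq_same]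
        omega
      · simp [hj]
    · simp [sum_add_distrib, hβ]
    · simpa [hj] using hβγk j hj

section ChebyshevCertificate

open Polynomial.Chebyshev

variable {n : ℕ}

noncomputable def chebT (i : Fin n) (k : ℤ) : MvPolynomial (Fin n) ℝ :=
  Polynomial.aeval (X i) (T ℝ k)

noncomputable def chebU (i : Fin n) (k : ℤ) : MvPolynomial (Fin n) ℝ :=
  Polynomial.aeval (X i) (U ℝ k)

theorem chebMv_eq_prod (α : Fin n → ℕ) : chebMv α = ∏ i, chebT i (α i) := rfl

theorem chebT_zero (i : Fin n) : chebT i 0 = 1 := by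
  simp [chebT, T_zero]

theorem chebU_neg_one (i : Fin n) : chebU i (-1) = 0 := by
  simp [chebU, U_neg_one]

theorem chebT_sq_add (i : Fin n) (m : ℤ) :
    chebT i m ^ 2 + (1 - X i ^ 2) * chebU i (m - 1) ^ 2 = 1 := by
  simpa only [chebT, chebU, map_add, map_mul, map_pow, map_sub, map_one, Polynomial.aeval_X] using
    congrArg (Polynomial.aeval (X i : MvPolynomial (Fin n) ℝ)) (T_sq_add_one_sub_X_sq_mul_U_sq m)

theorem chebT_add (i : Fin n) (m k : ℤ) :
    chebT i (m + k) =
      chebT i m * chebT i k - (1 - X i ^ 2) * (chebU i (m - 1) * chebU i (k - 1)) := by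
  simpa only [chebT, chebU, map_mul, map_pow, map_sub, map_one, Polynomial.aeval_X] using
    congrArg (Polynomial.aeval (X i : MvPolynomial (Fin n) ℝ)) (T_add m k)

theorem totalDegree_chebT_le (i : Fin n) (k : ℕ) : (chebT i k).totalDegree ≤ k :=
  (totalDegree_aeval_X_le _ _).trans (by simp)

theorem totalDegree_prod_chebT_le (s : Finset (Fin n)) (β : Fin n → ℕ) :
    (∏ j ∈ s, chebT j (β j)).totalDegree ≤ ∑ j ∈ s, β j :=
  (totalDegree_finsetProd _ _).trans (sum_le_sum fun j _ => totalDegree_chebT_le j (β j))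

theorem totalDegree_chebT_mul_le {i : Fin n} {b d : ℕ} {P : MvPolynomial (Fin n) ℝ}
    (h : b + P.totalDegree ≤ d) : (chebT i b * P).totalDegree ≤ d :=
  (totalDegree_mul _ _).trans (by have := totalDegree_chebT_le i b; omega)

theorem totalDegree_chebU_mul_le {i : Fin n} {b d : ℕ} {P : MvPolynomial (Fin n) ℝ}
    (h : b + P.totalDegree ≤ d) : (chebU i (b - 1) * P).totalDegree ≤ d - 1 := by
  rcases b with _ | b
  · simp [chebU_neg_one]
  · have hU : (chebU i ((b + 1 : ℕ) - 1)).totalDegree ≤ b :=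
      (totalDegree_aeval_X_le _ _).trans (by simp [natDegree_U]; omega)
    exact (totalDegree_mul _ _).trans (by omega)

theorem memCubeQM_one_sub_prod_sq (s : Finset (Fin n)) (β : Fin n → ℕ) :
    memCubeQM n (2 * ∑ j ∈ s, β j) (1 - (∏ j ∈ s, chebT j (β j)) ^ 2) := by
  induction s using Finset.induction_on with
  | empty => simpa using memCubeQM_zero
  | insert a s ha ih =>
    set P := ∏ j ∈ s, chebT j (β j)
    have hP : β a + P.totalDegree ≤ β a + ∑ j ∈ s, β j :=
      Nat.add_le_add_left (totalDegree_prod_chebT_le s β) _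
    have hsplit : 1 - (chebT a (β a) * P) ^ 2 =
        (1 - P ^ 2) + (1 - X a ^ 2) * (chebU a (β a - 1) * P) ^ 2 := by
      linear_combination -P ^ 2 * chebT_sq_add a (β a)
    rw [prod_insert ha, sum_insert ha, hsplit]
    exact (ih.mono (by omega)).add
      (memCubeQM_one_sub_X_sq_mul_sq a (totalDegree_chebU_mul_le hP))

theorem memCubeQM_one_sub_smul_chebT_mul_mul {r b c : ℕ} (i : Fin n)
    {P Q : MvPolynomial (Fin n) ℝ} (hP : memCubeQM n (2 * r) (1 - P ^ 2))
    (hQ : memCubeQM n (2 * r) (1 - Q ^ 2)) (hPb : b + P.totalDegree ≤ r)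
    (hQc : c + Q.totalDegree ≤ r) {ε : ℝ} (hε : ε ^ 2 = 1) :
    memCubeQM n (2 * r) (1 - ε • (chebT i (b + c : ℕ) * (P * Q))) := by
  have hcert := two_mul_one_sub_mul_mul_eq (t := chebT i (b + c : ℕ)) (P := P) (Q := Q)
    (chebT_sq_add i b) (chebT_sq_add i c) (by rw [Nat.cast_add]; exact chebT_add i b c)
    (e := MvPolynomial.C ε) (by rw [← map_pow, hε, map_one])
  have hhalf : 1 - ε • (chebT i (b + c : ℕ) * (P * Q)) =
      (1 / 2 : ℝ) • (2 * (1 - MvPolynomial.C ε * (chebT i (b + c : ℕ) * (P * Q)))) := by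
    rw [two_mul, smul_add, ← add_smul, MvPolynomial.smul_eq_C_mul _ ε]
    norm_num
  rw [hhalf, hcert]
  simp only [← MvPolynomial.smul_eq_C_mul]
  refine memCubeQM.smul (by norm_num) ((((memCubeQM_sq ?_).add
    (memCubeQM_one_sub_X_sq_mul_sq i ?_)).add hP).add hQ)
  · exact (totalDegree_sub _ _).trans (max_le (totalDegree_chebT_mul_le hPb)
      ((totalDegree_smul_le _ _).trans (totalDegree_chebT_mul_le hQc)))
  · exact (totalDegree_add _ _).trans (max_le (totalDegree_chebU_mul_le hPb)
      ((totalDegree_smul_le _ _).trans (totalDegree_chebU_mul_le hQc)))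

theorem chebMv_add_eq_mul_prod_erase (β γ : Fin n → ℕ) (i : Fin n)
    (h : ∀ j ≠ i, β j = 0 ∨ γ j = 0) :
    chebMv (β + γ) = chebT i (β i + γ i : ℕ) *
      ((∏ j ∈ univ.erase i, chebT j (β j)) * ∏ j ∈ univ.erase i, chebT j (γ j)) := by
  rw [chebMv_eq_prod, ← mul_prod_erase univ _ (mem_univ i), ← prod_mul_distrib]
  congr 1
  refine prod_congr rfl fun j hj => ?_
  rcases h j (ne_of_mem_erase hj) with h0 | h0 <;> simp [h0, chebT_zero]

theorem memCubeQM_one_sub_smul_chebMv {r : ℕ} {α : Fin n → ℕ} (hα : ∑ i, α i ≤ 2 * r)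
    {ε : ℝ} (hε : ε ^ 2 = 1) : memCubeQM n (2 * r) (1 - ε • chebMv α) := by
  rcases eq_or_ne α 0 with rfl | hα0
  · have hε1 : 0 ≤ 1 - ε := by nlinarith
    simpa [chebMv_zero, Algebra.smul_def] using memCubeQM_C (n := n) (m := 2 * r) hε1
  obtain ⟨i₀, -⟩ := Function.ne_iff.mp hα0
  have : Nonempty (Fin n) := ⟨i₀⟩
  obtain ⟨i, β, γ, rfl, hβ, hβγ⟩ := exists_add_eq_sum_eq α (Nat.sub_le (∑ i, α i) r)
  have hsum : ∑ j, (β + γ) j = ∑ j, β j + ∑ j, γ j := sum_add_distrib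
  have hβi := add_sum_erase univ β (mem_univ i)
  have hγi := add_sum_erase univ γ (mem_univ i)
  have hP := totalDegree_prod_chebT_le (univ.erase i) β
  have hQ := totalDegree_prod_chebT_le (univ.erase i) γ
  rw [chebMv_add_eq_mul_prod_erase β γ i hβγ]
  exact memCubeQM_one_sub_smul_chebT_mul_mul i
    ((memCubeQM_one_sub_prod_sq _ β).mono (by omega))
    ((memCubeQM_one_sub_prod_sq _ γ).mono (by omega)) (by omega) (by omega) hε

theorem memCubeQM_C_abs_add_smul_chebMv {r : ℕ} {α : Fin n → ℕ} (hα : ∑ i, α i ≤ 2 * r)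
    (a : ℝ) : memCubeQM n (2 * r) (MvPolynomial.C |a| + a • chebMv α) := by
  rcases le_or_gt 0 a with ha | ha
  · convert (memCubeQM_one_sub_smul_chebMv hα (ε := -1) (by norm_num)).smul ha using 1
    rw [abs_of_nonneg ha, MvPolynomial.C_eq_smul_one]
    module
  · convert (memCubeQM_one_sub_smul_chebMv hα (ε := 1) (by norm_num)).smul
      (neg_nonneg.mpr ha.le) using 1
    rw [abs_of_neg ha, MvPolynomial.C_eq_smul_one]
    module

theorem memCubeQM_add_C_sum_abs {r : ℕ} {p : MvPolynomial (Fin n) ℝ}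
    (hp : p.totalDegree ≤ 2 * r) {c : (Fin n → ℕ) →₀ ℝ} (hc : p = ∑ α ∈ c.support, c α • chebMv α) :
    memCubeQM n (2 * r) (p + MvPolynomial.C (∑ α ∈ c.support, |c α|)) := by
  have hsupp := sum_le_of_eq_sum_smul_chebMv hp hc
  rw [hc, map_sum, ← sum_add_distrib]
  exact memCubeQM_sum fun α hα => by
    rw [add_comm]; exact memCubeQM_C_abs_add_smul_chebMv (hsupp α hα) _

end ChebyshevCertificate

/-- Let `f` have degree at most `r`, let `f_min` be the minimum of `f` on
`[-1,1]ⁿ` and let `f_{(2r)} = sup {t : f - t ∈ Q(1-x₁², …, 1-xₙ²)_{2r}}`. Then for every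
`q ∈ Q(1-x₁², …, 1-xₙ²)_{2r}`, with `∑_α c_α T_α` the Chebyshev expansion of
`f - f_min - q`, one has `f_min - f_{(2r)} ≤ ‖f - f_min - q‖_{1,cheb} = ∑_α |c_α|`. -/
theorem lasserre_gap_le_chebNorm (n r : ℕ) (f : MvPolynomial (Fin n) ℝ)
    (hr : f.totalDegree ≤ r) (fmin : ℝ)
    (hmin : IsLeast ((fun x => MvPolynomial.eval x f) ''
      {x : Fin n → ℝ | ∀ i, x i ∈ Set.Icc (-1 : ℝ) 1}) fmin)
    (q : MvPolynomial (Fin n) ℝ) (hq : memCubeQM n (2 * r) q)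
    (c : (Fin n → ℕ) →₀ ℝ)
    (hc : f - MvPolynomial.C fmin - q = ∑ α ∈ c.support, c α • chebMv α) :
    fmin - sSup {t : ℝ | memCubeQM n (2 * r) (f - MvPolynomial.C t)} ≤
      ∑ α ∈ c.support, |c α| := by
  obtain ⟨⟨x₀, hx₀, rfl⟩, -⟩ := hmin
  have hbdd : BddAbove {t : ℝ | memCubeQM n (2 * r) (f - MvPolynomial.C t)} :=
    ⟨_, fun t ht => sub_nonneg.mp (by simpa using ht.eval_nonneg hx₀)⟩
  -- As `2 * 0 - 2 = 0`, `Q_0` contains `1 - x_i ^ 2`: `q` may have degree 2, but `f` is constant.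
  rcases Nat.eq_zero_or_pos r with rfl | hr0
  · have hf : f = MvPolynomial.C (MvPolynomial.eval x₀ f) := by
      rw [MvPolynomial.totalDegree_eq_zero_iff_eq_C.mp (Nat.le_zero.mp hr), MvPolynomial.eval_C]
    have hmem : memCubeQM n (2 * 0) (f - MvPolynomial.C (MvPolynomial.eval x₀ f)) := by
      rw [← hf, sub_self]
      exact memCubeQM_zero
    linarith [le_csSup hbdd hmem, sum_nonneg fun α (_ : α ∈ c.support) => abs_nonneg (c α)]
  · have hdeg : (f - MvPolynomial.C (MvPolynomial.eval x₀ f) - q).totalDegree ≤ 2 * r :=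
      (MvPolynomial.totalDegree_sub _ _).trans (max_le
        ((MvPolynomial.totalDegree_sub_C_le _ _).trans (by omega)) (hq.totalDegree_le (by omega)))
    have hmem : memCubeQM n (2 * r)
        (f - MvPolynomial.C (MvPolynomial.eval x₀ f - ∑ α ∈ c.support, |c α|)) := by
      convert (memCubeQM_add_C_sum_abs hdeg hc).add hq using 1
      rw [map_sub]
      ring
    linarith [le_csSup hbdd hmem]
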